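/- Let (X,d,W) be a UCW-hyperbolic space with monotone modulus of uniform convexity η, C ⊆ X a nonempty convex subset, T : C → C nonexpansive with a fixed point, and (λ_n),(s_n) sequences in [0,1] such that Σ_{n=0}^∞ λ_n(1−λ_n) diverges, limsup_n s_n < 1 and Σ_{n=0}^∞ s_n(1−λ_n) converges. Let (x_n) be the Ishikawa iteration starting with x ∈ C. Then lim_{n→∞} d(x_n, Tx_n) = 0. Moreover, if θ : ℕ → ℕ is a rate of divergence for Σ_{n=0}^∞ λ_n(1−λ_n), L, N_0 ∈ ℕ are such that s_n ≤ 1 − 1/L for all n ≥ N_0, γ is a Cauchy modulus for Σ_{n=0}^∞ s_n(1−λ_n), and b > 0 satisfies b ≥ d(x,p) for some fixed point p of T, then for all ε > 0 and all n ≥ Φ(ε,η,b,θ,L,N_0,γ) one has d(x_n, Tx_n) < ε, where Φ(ε,η,b,θ,L,N_0,γ) := θ(⌈2L(b+1)/(ε·η(b, ε/(2Lb)))⌉ + γ(ε/(8b)) + N_0 + 1) if ε ≤ 4Lb, and Φ(ε,η,b,θ,L,N_0,γ) := γ(ε/(8b)) + N_0 + 1 otherwise. -/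

import Mathlib

open Set Filter Metric Bornology Function

/-- A `W`-hyperbolic space structure on a metric space `X` (Kohlenbach).
`W x y l` denotes `(1-l)x ⊕ l y`. -/
structure WHyp (X : Type*) [MetricSpace X] where
  W : X → X → ℝ → X
  W1 : ∀ (x y z : X), ∀ l ∈ Set.Icc (0:ℝ) 1,
    dist z (W x y l) ≤ (1 - l) * dist z x + l * dist z y
  W2 : ∀ (x y : X), ∀ l ∈ Set.Icc (0:ℝ) 1, ∀ l' ∈ Set.Icc (0:ℝ) 1,
    dist (W x y l) (W x y l') = |l - l'| * dist x y
  W3 : ∀ (x y : X), ∀ l ∈ Set.Icc (0:ℝ) 1, W x y l = W y x (1 - l)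
  W4 : ∀ (x y z w : X), ∀ l ∈ Set.Icc (0:ℝ) 1,
    dist (W x z l) (W y w l) ≤ (1 - l) * dist x y + l * dist z w

/-- `η` is a modulus of uniform convexity for the `W`-hyperbolic space `H`. -/
def WHyp.UnifConvex {X : Type*} [MetricSpace X] (H : WHyp X) (η : ℝ → ℝ → ℝ) : Prop :=
  (∀ r ε : ℝ, 0 < r → ε ∈ Set.Ioc (0:ℝ) 2 → η r ε ∈ Set.Ioc (0:ℝ) 1) ∧
  (∀ (r ε : ℝ) (a x y : X), 0 < r → ε ∈ Set.Ioc (0:ℝ) 2 →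
    dist x a ≤ r → dist y a ≤ r → ε * r ≤ dist x y →
    dist (H.W x y (1/2)) a ≤ (1 - η r ε) * r)

/-- A modulus of uniform convexity is monotone if it decreases in `r` for fixed `ε`. -/
def MonotoneModulus (η : ℝ → ℝ → ℝ) : Prop :=
  ∀ r s ε : ℝ, 0 < r → r ≤ s → ε ∈ Set.Ioc (0:ℝ) 2 → η s ε ≤ η r ε

/-- A subset `C` is convex in the `W`-hyperbolic space `H`. -/
def WHyp.ConvexSet {X : Type*} [MetricSpace X] (H : WHyp X) (C : Set X) : Prop :=
  ∀ x ∈ C, ∀ y ∈ C, ∀ l ∈ Set.Icc (0:ℝ) 1, H.W x y l ∈ C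

/-- The Ishikawa iteration: `x₀ = x`,
`x_{n+1} = (1-λ_n)x_n ⊕ λ_n T((1-s_n)x_n ⊕ s_n T x_n)`. -/
def WHyp.ishSeq {X : Type*} [MetricSpace X] (H : WHyp X) (T : X → X) (l s : ℕ → ℝ)
    (x : X) : ℕ → X
  | 0 => x
  | n + 1 =>
      H.W (H.ishSeq T l s x n)
        (T (H.W (H.ishSeq T l s x n) (T (H.ishSeq T l s x n)) (s n))) (l n)

/-!
Fejér monotonicity: the distance from `xₙ` to a fixed point `p` never increases, so it stays
below `b` and the displacement `d(xₙ, T xₙ)` stays below `2b`. One Ishikawa step multiplies the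
displacement by at most `1 + 2 sₙ(1 - λₙ)`, so past the index `γ(ε/(8b))` it can grow by less
than `ε/2` in total. On the other hand, while the displacement is at least `ε/2` and
`sₙ ≤ 1 - 1/L`, uniform convexity makes `d(xₙ, p)` drop by at least
`(ε/2) η(b, ε/(2Lb)) λₙ(1 - λₙ)`; since `Σ λₙ(1 - λₙ)` diverges at rate `θ`, this cannot last
until `Φ`, so the displacement falls below `ε/2` at some index between `γ(ε/(8b))` and `Φ`
and stays below `ε` from then on.
The limit follows because `θ`, `L`, `N₀` and `γ` always exist.
-/

lemma sub_le_sum_Ico_of_succ_sub_le {a w : ℕ → ℝ} {N M : ℕ} (hNM : N ≤ M)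
    (h : ∀ i ∈ Finset.Ico N M, a (i + 1) - a i ≤ w i) : a M - a N ≤ ∑ i ∈ Finset.Ico N M, w i := by
  rw [← Finset.sum_Ico_sub a hNM]
  exact Finset.sum_le_sum h

lemma natCast_le_sum_Ico_of_rate {a : ℕ → ℝ} (ha : ∀ n, a n ≤ 1) {θ : ℕ → ℕ}
    (hθ : ∀ n : ℕ, (n : ℝ) ≤ ∑ i ∈ Finset.range (θ n + 1), a i) (D N : ℕ) :
    N ≤ θ (D + N) + 1 ∧ (D : ℝ) ≤ ∑ i ∈ Finset.Ico N (θ (D + N) + 1), a i := by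
  have hle : ∀ k, ∑ i ∈ Finset.range k, a i ≤ k := fun k => by
    simpa using Finset.sum_le_sum fun i (_ : i ∈ Finset.range k) => ha i
  have hθDN := hθ (D + N)
  have hN : N ≤ θ (D + N) + 1 :=
    (Nat.le_add_left N D).trans (by exact_mod_cast hθDN.trans (hle _))
  refine ⟨hN, ?_⟩
  rw [Finset.sum_Ico_eq_sub _ hN]
  push_cast at hθDN
  linarith [hle N]

lemma sum_Ico_lt_of_cauchy_modulus {a : ℕ → ℝ} (ha : ∀ n, 0 ≤ a n) {γ : ℝ → ℕ}
    (hγ : ∀ ε : ℝ, 0 < ε → ∀ m : ℕ,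
      |(∑ i ∈ Finset.range (γ ε + m + 1), a i) - ∑ i ∈ Finset.range (γ ε + 1), a i| < ε)
    {ε : ℝ} (hε : 0 < ε) {i n : ℕ} (hi : γ ε < i) : ∑ j ∈ Finset.Ico i n, a j < ε := by
  rcases le_or_gt n i with hn | hn
  · rwa [Finset.Ico_eq_empty_of_le hn, Finset.sum_empty]
  have hsplit : γ ε + (n - (γ ε + 1)) + 1 = n := by omega
  calc ∑ j ∈ Finset.Ico i n, a j ≤ ∑ j ∈ Finset.Ico (γ ε + 1) n, a j :=
        Finset.sum_le_sum_of_subset_of_nonneg (Finset.Ico_subset_Ico hi le_rfl) fun j _ _ => ha j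
    _ = (∑ j ∈ Finset.range n, a j) - ∑ j ∈ Finset.range (γ ε + 1), a j :=
        Finset.sum_Ico_eq_sub _ (by omega)
    _ ≤ _ := le_abs_self _
    _ < ε := by simpa only [hsplit] using hγ ε hε (n - (γ ε + 1))

lemma exists_rate_of_not_summable {a : ℕ → ℝ} (ha : ∀ n, 0 ≤ a n) (h : ¬ Summable a) :
    ∃ θ : ℕ → ℕ, ∀ n : ℕ, (n : ℝ) ≤ ∑ i ∈ Finset.range (θ n + 1), a i := by
  have hdiv := ((not_summable_iff_tendsto_nat_atTop_of_nonneg ha).1 h).comp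
    (tendsto_add_atTop_nat 1)
  choose θ hθ using fun n : ℕ => (hdiv.eventually_ge_atTop (n : ℝ)).exists
  exact ⟨θ, hθ⟩

lemma exists_cauchy_modulus {a : ℕ → ℝ} (h : Summable a) :
    ∃ γ : ℝ → ℕ, ∀ ε : ℝ, 0 < ε → ∀ m : ℕ,
      |(∑ i ∈ Finset.range (γ ε + m + 1), a i) - ∑ i ∈ Finset.range (γ ε + 1), a i| < ε := by
  have hcauchy : CauchySeq fun k => ∑ i ∈ Finset.range (k + 1), a i :=
    (h.hasSum.tendsto_sum_nat.comp (tendsto_add_atTop_nat 1)).cauchySeq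
  choose! γ hγ using Metric.cauchySeq_iff'.1 hcauchy
  exact ⟨γ, fun ε hε m => hγ ε hε (γ ε + m) (by omega)⟩

lemma exists_le_one_sub_inv_of_limsup_lt_one {s : ℕ → ℝ} (hs : ∀ n, s n ≤ 1)
    (h : limsup s atTop < 1) : ∃ L N₀ : ℕ, 1 ≤ L ∧ ∀ n ≥ N₀, s n ≤ 1 - 1 / (L : ℝ) := by
  obtain ⟨k, hk⟩ := exists_nat_one_div_lt (sub_pos.2 h)
  have hev := eventually_lt_of_limsup_lt (lt_sub_comm.1 hk) (isBoundedUnder_of ⟨1, hs⟩)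
  obtain ⟨N₀, hN₀⟩ := eventually_atTop.1 hev
  exact ⟨k + 1, N₀, by omega, fun n hn => by exact_mod_cast (hN₀ n hn).le⟩

/-- The paper's rate `Φ(ε, η, b, θ, L, N₀, γ)`. -/
noncomputable def ishikawaRate (η : ℝ → ℝ → ℝ) (b : ℝ) (θ : ℕ → ℕ) (L N₀ : ℕ) (γ : ℝ → ℕ)
    (ε : ℝ) : ℕ :=
  if ε ≤ 4 * L * b then
    θ (⌈2 * L * (b + 1) / (ε * η b (ε / (2 * L * b)))⌉₊ + γ (ε / (8 * b)) + N₀ + 1)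
  else γ (ε / (8 * b)) + N₀ + 1

namespace WHyp

variable {X : Type*} [MetricSpace X] (H : WHyp X)

lemma W_zero (x y : X) : H.W x y 0 = x := by
  simpa [eq_comm] using H.W1 x y x 0 (by norm_num)

lemma W_one (x y : X) : H.W x y 1 = y := by
  rw [H.W3 x y 1 (by norm_num), sub_self, W_zero]

lemma dist_W_left (x y : X) {l : ℝ} (hl : l ∈ Icc (0 : ℝ) 1) :
    dist x (H.W x y l) = l * dist x y := by
  have h := H.W2 x y l hl 0 (by norm_num)
  rwa [H.W_zero, sub_zero, abs_of_nonneg hl.1, dist_comm] at h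

lemma dist_W_right (x y : X) {l : ℝ} (hl : l ∈ Icc (0 : ℝ) 1) :
    dist (H.W x y l) y = (1 - l) * dist x y := by
  have h := H.W2 x y l hl 1 (by norm_num)
  rw [H.W_one, abs_of_nonpos (by linarith [hl.2])] at h
  linarith

lemma dist_W_le_of_dist_le {x y a : X} {l : ℝ} (hl : l ∈ Icc (0 : ℝ) 1)
    (hya : dist y a ≤ dist x a) : dist (H.W x y l) a ≤ dist x a := by
  rw [dist_comm]
  calc dist a (H.W x y l) ≤ (1 - l) * dist a x + l * dist a y := H.W1 x y a l hl
    _ ≤ (1 - l) * dist x a + l * dist x a := by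
        rw [dist_comm a x, dist_comm a y]; gcongr; exact hl.1
    _ = dist x a := by ring

variable {H} {η : ℝ → ℝ → ℝ}

/-- Two distinct points between `x` and `y` at equal distance from `x` would have a midpoint
strictly closer to `x`, contradicting the triangle inequality through `y`. -/
lemma UnifConvex.eq_of_between_of_dist_eq (hU : H.UnifConvex η) {x y z w : X}
    (hz : dist x z + dist z y ≤ dist x y) (hw : dist x w + dist w y ≤ dist x y)
    (hzw : dist x z = dist x w) : z = w := by
  by_contra hne
  set t := dist x z
  have hzw_pos : 0 < dist z w := dist_pos.mpr hne
  have hzw_le : dist z w ≤ 2 * t := by linarith [dist_triangle_left z w x]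
  have ht : 0 < t := by linarith
  set m := H.W z w (1 / 2)
  have h12 : (1 / 2 : ℝ) ∈ Icc (0 : ℝ) 1 := by norm_num
  have hmy : dist m y ≤ dist x y - t := by
    rw [dist_comm]
    calc dist y m ≤ (1 - 1 / 2) * dist y z + 1 / 2 * dist y w := H.W1 z w y _ h12
      _ ≤ dist x y - t := by rw [dist_comm y z, dist_comm y w]; linarith
  have hε : dist z w / t ∈ Ioc (0 : ℝ) 2 :=
    ⟨div_pos hzw_pos ht, (div_le_iff₀ ht).2 hzw_le⟩
  have hmx := hU.2 t _ x z w ht hε (by rw [dist_comm]) (by rw [dist_comm, ← hzw])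
    (by rw [div_mul_cancel₀ _ ht.ne'])
  have hη := (hU.1 t _ ht hε).1
  nlinarith [dist_triangle x m y, dist_comm m x]

lemma UnifConvex.W_W_half (hU : H.UnifConvex η) (x y : X) {l : ℝ} (hl0 : 0 ≤ l)
    (hl : l ≤ 1 / 2) : H.W x (H.W x y (1 / 2)) (2 * l) = H.W x y l := by
  have h12 : (1 / 2 : ℝ) ∈ Icc (0 : ℝ) 1 := by norm_num
  have h2l : 2 * l ∈ Icc (0 : ℝ) 1 := ⟨by linarith, by linarith⟩
  have hl' : l ∈ Icc (0 : ℝ) 1 := ⟨hl0, by linarith⟩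
  set m := H.W x y (1 / 2)
  have hxm := H.dist_W_left x y h12
  have hmy := H.dist_W_right x y h12
  refine hU.eq_of_between_of_dist_eq (x := x) (y := y) ?_ ?_ ?_
  · have := dist_triangle (H.W x m (2 * l)) m y
    rw [H.dist_W_left x m h2l, H.dist_W_right x m h2l, hxm] at *
    linarith
  · rw [H.dist_W_left x y hl', H.dist_W_right x y hl']; linarith
  · rw [H.dist_W_left x m h2l, H.dist_W_left x y hl', hxm]; ring

/-- Uniform convexity at an arbitrary weight `l`, obtained from the midpoint case by writing
`(1-l)x ⊕ ly` (for `l ≤ 1/2`) as the point at weight `2l` on the segment from `x` to the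
midpoint. -/
lemma UnifConvex.dist_W_le (hU : H.UnifConvex η) {r ε l : ℝ} {a x y : X} (hr : 0 < r)
    (hε : ε ∈ Ioc (0 : ℝ) 2) (hl : l ∈ Icc (0 : ℝ) 1) (hxa : dist x a ≤ r)
    (hya : dist y a ≤ r) (hxy : ε * r ≤ dist x y) :
    dist (H.W x y l) a ≤ (1 - 2 * l * (1 - l) * η r ε) * r := by
  have hη := hU.1 r ε hr hε
  have half : ∀ {x y : X} {l : ℝ}, 0 ≤ l → l ≤ 1 / 2 → dist x a ≤ r → dist y a ≤ r →
      ε * r ≤ dist x y → dist (H.W x y l) a ≤ (1 - 2 * l * (1 - l) * η r ε) * r := by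
    intro x y l hl0 hl hxa hya hxy
    have h2l : 2 * l ∈ Icc (0 : ℝ) 1 := ⟨by linarith, by linarith⟩
    have hmid := hU.2 r ε a x y hr hε hxa hya hxy
    rw [← hU.W_W_half x y hl0 hl, dist_comm]
    calc dist a (H.W x (H.W x y (1 / 2)) (2 * l))
        ≤ (1 - 2 * l) * dist a x + 2 * l * dist a (H.W x y (1 / 2)) := H.W1 _ _ a _ h2l
      _ ≤ (1 - 2 * l) * r + 2 * l * ((1 - η r ε) * r) := by
          rw [dist_comm a x, dist_comm a]; gcongr; linarith
      _ ≤ (1 - 2 * l * (1 - l) * η r ε) * r := by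
          nlinarith [mul_nonneg (mul_nonneg (mul_nonneg hl0 hl0) hη.1.le) hr.le]
  rcases le_total l (1 / 2) with h | h
  · exact half hl.1 h hxa hya hxy
  · rw [H.W3 x y l hl]
    convert half (l := 1 - l) (by linarith [hl.2]) (by linarith) hya hxa
      (by rwa [dist_comm]) using 2
    ring

lemma UnifConvex.dist_W_le_sub (hU : H.UnifConvex η) (hmon : MonotoneModulus η)
    {r b ε l : ℝ} {a x y : X} (hr : 0 < r) (hrb : r ≤ b) (hε : ε ∈ Ioc (0 : ℝ) 2)
    (hl : l ∈ Icc (0 : ℝ) 1) (hxa : dist x a ≤ r) (hya : dist y a ≤ r)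
    (hxy : ε * b ≤ dist x y) :
    dist (H.W x y l) a ≤ r - 2 * (l * (1 - l)) * η b ε * r := by
  have hηr := hmon r b ε hr hrb hε
  have hεr : ε * r ≤ dist x y := le_trans (by gcongr; exact hε.1.le) hxy
  have hll : 0 ≤ l * (1 - l) := mul_nonneg hl.1 (by linarith [hl.2])
  calc dist (H.W x y l) a ≤ (1 - 2 * l * (1 - l) * η r ε) * r :=
        hU.dist_W_le hr hε hl hxa hya hεr
    _ ≤ r - 2 * (l * (1 - l)) * η b ε * r := by nlinarith [mul_le_mul_of_nonneg_left hηr hll]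

section Step

variable {C : Set X} {T : X → X} {u p : X} {l s : ℝ}

variable (H) in
def ishStep (T : X → X) (l s : ℝ) (u : X) : X := H.W u (T (H.W u (T u) s)) l

lemma ishStep_mem (hC : H.ConvexSet C) (hT : MapsTo T C C) (hl : l ∈ Icc (0 : ℝ) 1)
    (hs : s ∈ Icc (0 : ℝ) 1) (hu : u ∈ C) : H.ishStep T l s u ∈ C :=
  hC _ hu _ (hT (hC _ hu _ (hT hu) _ hs)) _ hl

lemma dist_T_le_of_fixed (hTne : ∀ x ∈ C, ∀ y ∈ C, dist (T x) (T y) ≤ dist x y) (hp : p ∈ C)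
    (hTp : T p = p) (hu : u ∈ C) : dist (T u) p ≤ dist u p := by
  simpa only [hTp] using hTne u hu p hp

lemma dist_self_T_le_two_mul (hTne : ∀ x ∈ C, ∀ y ∈ C, dist (T x) (T y) ≤ dist x y)
    (hp : p ∈ C) (hTp : T p = p) (hu : u ∈ C) : dist u (T u) ≤ 2 * dist u p := by
  linarith [dist_triangle_right u (T u) p, dist_T_le_of_fixed hTne hp hTp hu]

lemma dist_T_W_le (hC : H.ConvexSet C) (hT : MapsTo T C C)
    (hTne : ∀ x ∈ C, ∀ y ∈ C, dist (T x) (T y) ≤ dist x y) (hp : p ∈ C) (hTp : T p = p)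
    (hs : s ∈ Icc (0 : ℝ) 1) (hu : u ∈ C) : dist (T (H.W u (T u) s)) p ≤ dist u p :=
  (dist_T_le_of_fixed hTne hp hTp (hC _ hu _ (hT hu) _ hs)).trans
    (H.dist_W_le_of_dist_le hs (dist_T_le_of_fixed hTne hp hTp hu))

lemma dist_ishStep_le (hC : H.ConvexSet C) (hT : MapsTo T C C)
    (hTne : ∀ x ∈ C, ∀ y ∈ C, dist (T x) (T y) ≤ dist x y) (hp : p ∈ C) (hTp : T p = p)
    (hl : l ∈ Icc (0 : ℝ) 1) (hs : s ∈ Icc (0 : ℝ) 1) (hu : u ∈ C) :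
    dist (H.ishStep T l s u) p ≤ dist u p :=
  H.dist_W_le_of_dist_le hl (dist_T_W_le hC hT hTne hp hTp hs hu)

lemma dist_T_T_W_le (hC : H.ConvexSet C) (hT : MapsTo T C C)
    (hTne : ∀ x ∈ C, ∀ y ∈ C, dist (T x) (T y) ≤ dist x y) (hs : s ∈ Icc (0 : ℝ) 1)
    (hu : u ∈ C) : dist (T u) (T (H.W u (T u) s)) ≤ s * dist u (T u) :=
  (hTne _ hu _ (hC _ hu _ (hT hu) _ hs)).trans_eq (H.dist_W_left _ _ hs)

lemma one_sub_mul_le_dist_T_W (hC : H.ConvexSet C) (hT : MapsTo T C C)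
    (hTne : ∀ x ∈ C, ∀ y ∈ C, dist (T x) (T y) ≤ dist x y) (hs : s ∈ Icc (0 : ℝ) 1)
    (hu : u ∈ C) : (1 - s) * dist u (T u) ≤ dist u (T (H.W u (T u) s)) := by
  linarith [dist_triangle u (T (H.W u (T u) s)) (T u), dist_T_T_W_le hC hT hTne hs hu,
    dist_comm (T u) (T (H.W u (T u) s))]

lemma dist_ishStep_T_le (hC : H.ConvexSet C) (hT : MapsTo T C C)
    (hTne : ∀ x ∈ C, ∀ y ∈ C, dist (T x) (T y) ≤ dist x y) (hl : l ∈ Icc (0 : ℝ) 1)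
    (hs : s ∈ Icc (0 : ℝ) 1) (hu : u ∈ C) :
    dist (H.ishStep T l s u) (T (H.ishStep T l s u)) ≤
      (1 + 2 * (s * (1 - l))) * dist u (T u) := by
  set c := dist u (T u)
  set v := H.W u (T u) s
  set u' := H.ishStep T l s u
  have hTuTv := dist_T_T_W_le hC hT hTne hs hu
  have hvTv : dist v (T v) ≤ c := by
    linarith [dist_triangle v (T u) (T v), H.dist_W_right u (T u) hs]
  have huTv : dist u (T v) ≤ (1 + s) * c := by
    linarith [dist_triangle u (T u) (T v)]
  have hu'Tv : dist u' (T v) = (1 - l) * dist u (T v) := H.dist_W_right _ _ hl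
  have hvu' : dist v u' ≤ (1 - l) * dist v u + l * dist v (T v) := H.W1 _ _ v l hl
  have hvu : dist v u = s * c := by rw [dist_comm]; exact H.dist_W_left _ _ hs
  have hTvTu' : dist (T v) (T u') ≤ dist v u' :=
    hTne _ (hC _ hu _ (hT hu) _ hs) _ (ishStep_mem hC hT hl hs hu)
  have h1l : 0 ≤ 1 - l := by linarith [hl.2]
  calc dist u' (T u') ≤ dist u' (T v) + dist (T v) (T u') := dist_triangle _ _ _
    _ ≤ (1 - l) * ((1 + s) * c) + ((1 - l) * (s * c) + l * c) := by
        have := mul_le_mul_of_nonneg_left hvTv hl.1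
        rw [hu'Tv, ← hvu]
        gcongr
        linarith
    _ = (1 + 2 * (s * (1 - l))) * c := by ring

end Step

variable {C : Set X} {T : X → X} {p x : X} {l s : ℕ → ℝ}

variable (H) in
lemma ishSeq_succ (n : ℕ) :
    H.ishSeq T l s x (n + 1) = H.ishStep T (l n) (s n) (H.ishSeq T l s x n) := rfl

lemma ishSeq_mem (hC : H.ConvexSet C) (hT : MapsTo T C C) (hl : ∀ n, l n ∈ Icc (0 : ℝ) 1)
    (hs : ∀ n, s n ∈ Icc (0 : ℝ) 1) (hx : x ∈ C) (n : ℕ) : H.ishSeq T l s x n ∈ C := by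
  induction n with
  | zero => exact hx
  | succ n ih => exact ishStep_mem hC hT (hl n) (hs n) ih

lemma dist_ishSeq_le (hC : H.ConvexSet C) (hT : MapsTo T C C)
    (hTne : ∀ x ∈ C, ∀ y ∈ C, dist (T x) (T y) ≤ dist x y) (hp : p ∈ C) (hTp : T p = p)
    (hl : ∀ n, l n ∈ Icc (0 : ℝ) 1) (hs : ∀ n, s n ∈ Icc (0 : ℝ) 1) (hx : x ∈ C) (n : ℕ) :
    dist (H.ishSeq T l s x n) p ≤ dist x p := by
  induction n with
  | zero => exact le_rfl
  | succ n ih =>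
    exact (dist_ishStep_le hC hT hTne hp hTp (hl n) (hs n) (ishSeq_mem hC hT hl hs hx n)).trans ih

lemma dist_ishSeq_T_le_add (hC : H.ConvexSet C) (hT : MapsTo T C C)
    (hTne : ∀ x ∈ C, ∀ y ∈ C, dist (T x) (T y) ≤ dist x y) (hp : p ∈ C) (hTp : T p = p)
    (hl : ∀ n, l n ∈ Icc (0 : ℝ) 1) (hs : ∀ n, s n ∈ Icc (0 : ℝ) 1) (hx : x ∈ C) {b : ℝ}
    (hxp : dist x p ≤ b) {i m : ℕ} (him : i ≤ m) :
    dist (H.ishSeq T l s x m) (T (H.ishSeq T l s x m)) ≤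
      dist (H.ishSeq T l s x i) (T (H.ishSeq T l s x i)) +
        4 * b * ∑ j ∈ Finset.Ico i m, s j * (1 - l j) := by
  rw [Finset.mul_sum, ← sub_le_iff_le_add']
  refine sub_le_sum_Ico_of_succ_sub_le
    (a := fun n => dist (H.ishSeq T l s x n) (T (H.ishSeq T l s x n))) him fun j _ => ?_
  have hxj := ishSeq_mem hC hT hl hs hx j
  have hstep := dist_ishStep_T_le hC hT hTne (hl j) (hs j) hxj
  have hc : dist (H.ishSeq T l s x j) (T (H.ishSeq T l s x j)) ≤ 2 * b :=
    (dist_self_T_le_two_mul hTne hp hTp hxj).trans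
      (by linarith [dist_ishSeq_le hC hT hTne hp hTp hl hs hx j])
  have hw : 0 ≤ s j * (1 - l j) := mul_nonneg (hs j).1 (sub_nonneg.2 (hl j).2)
  rw [ishSeq_succ]
  nlinarith [mul_le_mul_of_nonneg_left hc hw]

lemma dist_ishSeq_succ_le_sub (hU : H.UnifConvex η) (hmon : MonotoneModulus η)
    (hC : H.ConvexSet C) (hT : MapsTo T C C)
    (hTne : ∀ x ∈ C, ∀ y ∈ C, dist (T x) (T y) ≤ dist x y) (hp : p ∈ C) (hTp : T p = p)
    (hl : ∀ n, l n ∈ Icc (0 : ℝ) 1) (hs : ∀ n, s n ∈ Icc (0 : ℝ) 1) (hx : x ∈ C)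
    {b ε δ : ℝ} {n : ℕ} (hxp : dist x p ≤ b) (hε : ε ∈ Ioc (0 : ℝ) 2) (hδ : 0 < δ)
    (hδn : δ ≤ dist (H.ishSeq T l s x n) (T (H.ishSeq T l s x n)))
    (hfar : ε * b ≤ (1 - s n) * δ) :
    dist (H.ishSeq T l s x (n + 1)) p ≤
      dist (H.ishSeq T l s x n) p - δ * η b ε * (l n * (1 - l n)) := by
  set u := H.ishSeq T l s x n
  have hu := ishSeq_mem hC hT hl hs hx n
  have hup : δ ≤ 2 * dist u p := hδn.trans (dist_self_T_le_two_mul hTne hp hTp hu)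
  have hub : dist u p ≤ b := (dist_ishSeq_le hC hT hTne hp hTp hl hs hx n).trans hxp
  have hfar' : ε * b ≤ dist u (T (H.W u (T u) (s n))) :=
    hfar.trans ((mul_le_mul_of_nonneg_left hδn (sub_nonneg.2 (hs n).2)).trans
      (one_sub_mul_le_dist_T_W hC hT hTne (hs n) hu))
  have hdrop := hU.dist_W_le_sub hmon (by linarith) hub hε (hl n) le_rfl
    (dist_T_W_le hC hT hTne hp hTp (hs n) hu) hfar'
  have hηb := (hU.1 b ε (by linarith) hε).1
  have hll : 0 ≤ l n * (1 - l n) := mul_nonneg (hl n).1 (sub_nonneg.2 (hl n).2)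
  rw [ishSeq_succ]
  refine hdrop.trans (sub_le_sub_left ?_ _)
  nlinarith [mul_le_mul_of_nonneg_left hup (mul_nonneg hll hηb.le)]

lemma exists_dist_ishSeq_T_lt_half (hU : H.UnifConvex η) (hmon : MonotoneModulus η)
    (hC : H.ConvexSet C) (hT : MapsTo T C C)
    (hTne : ∀ x ∈ C, ∀ y ∈ C, dist (T x) (T y) ≤ dist x y) (hp : p ∈ C) (hTp : T p = p)
    (hl : ∀ n, l n ∈ Icc (0 : ℝ) 1) (hs : ∀ n, s n ∈ Icc (0 : ℝ) 1) (hx : x ∈ C)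
    {θ : ℕ → ℕ} (hθ : ∀ n : ℕ, (n : ℝ) ≤ ∑ i ∈ Finset.range (θ n + 1), l i * (1 - l i))
    {L N₀ N : ℕ} (hL : 1 ≤ L) (hLs : ∀ n ≥ N₀, s n ≤ 1 - 1 / (L : ℝ)) (hN : N₀ ≤ N)
    {b ε : ℝ} (hb : 0 < b) (hxp : dist x p ≤ b) (hε : 0 < ε) (hεb : ε ≤ 4 * L * b) :
    ∃ i, N ≤ i ∧ i ≤ θ (⌈2 * L * (b + 1) / (ε * η b (ε / (2 * L * b)))⌉₊ + N) ∧
      dist (H.ishSeq T l s x i) (T (H.ishSeq T l s x i)) < ε / 2 := by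
  set ε' := ε / (2 * L * b)
  set D := ⌈2 * L * (b + 1) / (ε * η b ε')⌉₊
  have hL' : (1 : ℝ) ≤ L := by exact_mod_cast hL
  have hε' : ε' ∈ Ioc (0 : ℝ) 2 :=
    ⟨by positivity, by rw [div_le_iff₀ (by positivity)]; linarith⟩
  have hη := (hU.1 b ε' hb hε').1
  by_contra! hbig
  obtain ⟨hNK, hD⟩ := natCast_le_sum_Ico_of_rate
    (fun n => mul_le_one₀ (hl n).2 (sub_nonneg.2 (hl n).2) (by linarith [(hl n).1])) hθ D N
  have hdrop := sub_le_sum_Ico_of_succ_sub_le (a := fun n => dist (H.ishSeq T l s x n) p)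
    (w := fun i => -(ε / 2 * η b ε' * (l i * (1 - l i)))) hNK fun i hi => by
      obtain ⟨hNi, hiK⟩ := Finset.mem_Ico.1 hi
      have hfar : ε' * b ≤ (1 - s i) * (ε / 2) := by
        have : 1 / (L : ℝ) ≤ 1 - s i := by linarith [hLs i (hN.trans hNi)]
        calc ε' * b = 1 / (L : ℝ) * (ε / 2) := by simp only [ε']; field_simp
          _ ≤ (1 - s i) * (ε / 2) := by gcongr
      linarith [dist_ishSeq_succ_le_sub hU hmon hC hT hTne hp hTp hl hs hx hxp hε'
        (half_pos hε) (hbig i hNi (by omega)) hfar]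
  rw [Finset.sum_neg_distrib, ← Finset.mul_sum] at hdrop
  have hbound : ε / 2 * η b ε' * D ≤ b := by
    have := (dist_ishSeq_le hC hT hTne hp hTp hl hs hx N).trans hxp
    nlinarith [dist_nonneg (x := H.ishSeq T l s x (θ (D + N) + 1)) (y := p),
      mul_le_mul_of_nonneg_left hD (by positivity : (0 : ℝ) ≤ ε / 2 * η b ε')]
  have hLD : L * (b + 1) ≤ ε / 2 * η b ε' * D :=
    calc L * (b + 1) = ε / 2 * η b ε' * (2 * L * (b + 1) / (ε * η b ε')) := by
          field_simp
      _ ≤ ε / 2 * η b ε' * D := by gcongr; exact Nat.le_ceil _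
  nlinarith

theorem dist_ishSeq_T_lt_of_ishikawaRate_le (hU : H.UnifConvex η) (hmon : MonotoneModulus η)
    (hC : H.ConvexSet C) (hT : MapsTo T C C)
    (hTne : ∀ x ∈ C, ∀ y ∈ C, dist (T x) (T y) ≤ dist x y) (hp : p ∈ C) (hTp : T p = p)
    (hl : ∀ n, l n ∈ Icc (0 : ℝ) 1) (hs : ∀ n, s n ∈ Icc (0 : ℝ) 1) (hx : x ∈ C)
    {θ : ℕ → ℕ} (hθ : ∀ n : ℕ, (n : ℝ) ≤ ∑ i ∈ Finset.range (θ n + 1), l i * (1 - l i))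
    {L N₀ : ℕ} (hL : 1 ≤ L) (hLs : ∀ n ≥ N₀, s n ≤ 1 - 1 / (L : ℝ)) {γ : ℝ → ℕ}
    (hγ : ∀ ε : ℝ, 0 < ε → ∀ m : ℕ,
      |(∑ i ∈ Finset.range (γ ε + m + 1), s i * (1 - l i)) -
        ∑ i ∈ Finset.range (γ ε + 1), s i * (1 - l i)| < ε)
    {b ε : ℝ} (hb : 0 < b) (hxp : dist x p ≤ b) (hε : 0 < ε) {n : ℕ}
    (hn : ishikawaRate η b θ L N₀ γ ε ≤ n) :
    dist (H.ishSeq T l s x n) (T (H.ishSeq T l s x n)) < ε := by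
  have hL' : (1 : ℝ) ≤ L := by exact_mod_cast hL
  unfold ishikawaRate at hn
  split_ifs at hn with hεb
  · set g := γ (ε / (8 * b))
    obtain ⟨i, hgi, hiK, hi⟩ := exists_dist_ishSeq_T_lt_half hU hmon hC hT hTne hp hTp hl hs hx
      hθ (N := g + N₀ + 1) hL hLs (by omega) hb hxp hε hεb
    rw [← add_assoc, ← add_assoc] at hiK
    have htail := sum_Ico_lt_of_cauchy_modulus
      (fun j => mul_nonneg (hs j).1 (sub_nonneg.2 (hl j).2)) hγ (by positivity : 0 < ε / (8 * b))
      (i := i) (n := n) (by omega)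
    calc dist (H.ishSeq T l s x n) (T (H.ishSeq T l s x n))
        ≤ dist (H.ishSeq T l s x i) (T (H.ishSeq T l s x i)) +
          4 * b * ∑ j ∈ Finset.Ico i n, s j * (1 - l j) :=
          dist_ishSeq_T_le_add hC hT hTne hp hTp hl hs hx hxp (by omega)
      _ < ε / 2 + 4 * b * (ε / (8 * b)) := by gcongr
      _ = ε := by field_simp; ring
  · calc dist (H.ishSeq T l s x n) (T (H.ishSeq T l s x n))
        ≤ 2 * dist (H.ishSeq T l s x n) p :=
          dist_self_T_le_two_mul hTne hp hTp (ishSeq_mem hC hT hl hs hx n)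
      _ ≤ 2 * b := by linarith [dist_ishSeq_le hC hT hTne hp hTp hl hs hx n]
      _ < ε := by nlinarith

theorem tendsto_dist_ishSeq_T_zero (hU : H.UnifConvex η) (hmon : MonotoneModulus η)
    (hC : H.ConvexSet C) (hT : MapsTo T C C)
    (hTne : ∀ x ∈ C, ∀ y ∈ C, dist (T x) (T y) ≤ dist x y) (hp : p ∈ C) (hTp : T p = p)
    (hl : ∀ n, l n ∈ Icc (0 : ℝ) 1) (hs : ∀ n, s n ∈ Icc (0 : ℝ) 1) (hx : x ∈ C)
    (hdiv : ¬ Summable fun n => l n * (1 - l n)) (hslim : limsup s atTop < 1)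
    (hconv : Summable fun n => s n * (1 - l n)) :
    Tendsto (fun n => dist (H.ishSeq T l s x n) (T (H.ishSeq T l s x n))) atTop (nhds 0) := by
  obtain ⟨θ, hθ⟩ :=
    exists_rate_of_not_summable (fun n => mul_nonneg (hl n).1 (sub_nonneg.2 (hl n).2)) hdiv
  obtain ⟨L, N₀, hL, hLs⟩ := exists_le_one_sub_inv_of_limsup_lt_one (fun n => (hs n).2) hslim
  obtain ⟨γ, hγ⟩ := exists_cauchy_modulus hconv
  refine Metric.tendsto_atTop.2 fun ε hε =>
    ⟨ishikawaRate η (dist x p + 1) θ L N₀ γ ε, fun n hn => ?_⟩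
  rw [dist_zero_right, Real.norm_of_nonneg dist_nonneg]
  exact dist_ishSeq_T_lt_of_ishikawaRate_le hU hmon hC hT hTne hp hTp hl hs hx hθ hL hLs hγ
    (by positivity) (le_add_of_nonneg_right zero_le_one) hε hn

end WHyp

theorem stmt19_general {X : Type*} [MetricSpace X] (H : WHyp X)
    (η : ℝ → ℝ → ℝ) (hU : H.UnifConvex η) (hmon : MonotoneModulus η)
    (C : Set X) (hCconv : H.ConvexSet C)
    (T : X → X) (hT : Set.MapsTo T C C)
    (hTne : ∀ x ∈ C, ∀ y ∈ C, dist (T x) (T y) ≤ dist x y)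
    (hfix : ∃ p ∈ C, T p = p)
    (l s : ℕ → ℝ) (hl : ∀ n, l n ∈ Set.Icc (0:ℝ) 1) (hs : ∀ n, s n ∈ Set.Icc (0:ℝ) 1)
    (x : X) (hx : x ∈ C)
    (xs : ℕ → X) (hxs : xs = H.ishSeq T l s x)
    (hdiv : ¬ Summable fun n => l n * (1 - l n))
    (hslim : Filter.limsup s Filter.atTop < 1)
    (hconv : Summable fun n => s n * (1 - l n)) :
    Filter.Tendsto (fun n => dist (xs n) (T (xs n))) Filter.atTop (nhds 0) ∧
    ∀ θ : ℕ → ℕ,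
      (∀ n : ℕ, (n : ℝ) ≤ ∑ i ∈ Finset.range (θ n + 1), l i * (1 - l i)) →
      ∀ L N₀ : ℕ, 1 ≤ L → (∀ n ≥ N₀, s n ≤ 1 - 1 / (L : ℝ)) →
      ∀ γ : ℝ → ℕ,
        (∀ ε : ℝ, 0 < ε → ∀ m : ℕ,
          |(∑ i ∈ Finset.range (γ ε + m + 1), s i * (1 - l i)) -
            ∑ i ∈ Finset.range (γ ε + 1), s i * (1 - l i)| < ε) →
      ∀ b : ℝ, 0 < b → (∃ p ∈ C, T p = p ∧ dist x p ≤ b) →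
      ∀ ε : ℝ, 0 < ε → ∀ n : ℕ,
        (if ε ≤ 4 * L * b then
          θ (⌈2 * L * (b + 1) / (ε * η b (ε / (2 * L * b)))⌉₊ + γ (ε / (8 * b)) + N₀ + 1)
        else γ (ε / (8 * b)) + N₀ + 1) ≤ n →
        dist (xs n) (T (xs n)) < ε := by
  subst hxs
  obtain ⟨p, hp, hTp⟩ := hfix
  exact ⟨WHyp.tendsto_dist_ishSeq_T_zero hU hmon hCconv hT hTne hp hTp hl hs hx hdiv hslim hconv,
    fun θ hθ L N₀ hL hLs γ hγ b hb ⟨q, hq, hTq, hxq⟩ ε hε n hn =>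
      WHyp.dist_ishSeq_T_lt_of_ishikawaRate_le hU hmon hCconv hT hTne hq hTq hl hs hx hθ hL hLs hγ
        hb hxq hε hn⟩

theorem stmt19 {X : Type*} [MetricSpace X] (H : WHyp X)
    (η : ℝ → ℝ → ℝ) (hU : H.UnifConvex η) (hmon : MonotoneModulus η)
    (C : Set X) (hCne : C.Nonempty) (hCconv : H.ConvexSet C)
    (T : X → X) (hT : Set.MapsTo T C C)
    (hTne : ∀ x ∈ C, ∀ y ∈ C, dist (T x) (T y) ≤ dist x y)
    (hfix : ∃ p ∈ C, T p = p)
    (l s : ℕ → ℝ) (hl : ∀ n, l n ∈ Set.Icc (0:ℝ) 1) (hs : ∀ n, s n ∈ Set.Icc (0:ℝ) 1)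
    (x : X) (hx : x ∈ C)
    (xs : ℕ → X) (hxs : xs = H.ishSeq T l s x)
    (ys : ℕ → X) (hys : ∀ n, ys n = H.W (xs n) (T (xs n)) (s n))
    (hdiv : ¬ Summable fun n => l n * (1 - l n))
    (hslim : Filter.limsup s Filter.atTop < 1)
    (hconv : Summable fun n => s n * (1 - l n)) :
    Filter.Tendsto (fun n => dist (xs n) (T (xs n))) Filter.atTop (nhds 0) ∧
    ∀ θ : ℕ → ℕ,
      (∀ n : ℕ, (n : ℝ) ≤ ∑ i ∈ Finset.range (θ n + 1), l i * (1 - l i)) →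
      ∀ L N₀ : ℕ, 1 ≤ L → (∀ n ≥ N₀, s n ≤ 1 - 1 / (L : ℝ)) →
      ∀ γ : ℝ → ℕ,
        (∀ ε : ℝ, 0 < ε → ∀ m : ℕ,
          |(∑ i ∈ Finset.range (γ ε + m + 1), s i * (1 - l i)) -
            ∑ i ∈ Finset.range (γ ε + 1), s i * (1 - l i)| < ε) →
      ∀ b : ℝ, 0 < b → (∃ p ∈ C, T p = p ∧ dist x p ≤ b) →
      ∀ ε : ℝ, 0 < ε → ∀ n : ℕ,
        (if ε ≤ 4 * L * b then
          θ (⌈2 * L * (b + 1) / (ε * η b (ε / (2 * L * b)))⌉₊ + γ (ε / (8 * b)) + N₀ + 1)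
        else γ (ε / (8 * b)) + N₀ + 1) ≤ n →
        dist (xs n) (T (xs n)) < ε :=
  stmt19_general H η hU hmon C hCconv T hT hTne hfix l s hl hs x hx xs hxs hdiv hslim hconv
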